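/- arXiv:2211.02839 — 2 statements merged into one kernel-verified Lean document; each statement's English description precedes it below -/
import Mathlib

section
/- If the 4×4 matrix A (as defined) is positive semidefinite, then per(A) ≥ 1 + 2Re(y·w·z̄) + |y|² + |z|² + |w|², and moreover 1 + 2Re(y·w·z̄) + |y|² + |z|² + |w|² ≥ 0. -/
open Matrix Complex ComplexOrder

/-!
Let `B` be the principal submatrix of `A` on the indices `0, 2, 3`. Then `per B` is exactly
`1 + 2 Re (y w z̄) + |y|² + |z|² + |w|²`, and `per B = det B + 2 (|y|² + |z|² + |w|²) ≥ 0`.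
Expanding `per A` shows that `2 (per A - per B)` is the quadratic form of `B ⊗ B` at the
symmetric matrix `symmetricCoeffs x t u`: if `B` is the Gram matrix of `e, f, g`, this is the
squared norm of the tensor `x̄ (f ⊗ g + g ⊗ f) + t (e ⊗ g + g ⊗ e) + u (e ⊗ f + f ⊗ e)`.
Since `B ⊗ B` is positive semidefinite, `per A ≥ per B`.
-/

open scoped Kronecker ComplexConjugate

namespace Matrix

variable {R : Type*} [CommSemiring R]

theorem permanent_succ_column_zero {n : ℕ} (A : Matrix (Fin n.succ) (Fin n.succ) R) :
    A.permanent = ∑ i : Fin n.succ, A i 0 * (A.submatrix i.succAbove Fin.succ).permanent := by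
  rw [permanent, Finset.univ_perm_fin_succ, ← Finset.univ_product_univ]
  simp only [Finset.sum_map, Equiv.toEmbedding_apply, Finset.sum_product]
  refine Finset.sum_congr rfl fun i _ => Fin.cases ?_ (fun i => ?_) i
  · simp [Fin.prod_univ_succ, permanent, Finset.mul_sum, Equiv.Perm.decomposeFin_symm_apply_zero,
      Equiv.Perm.decomposeFin_symm_apply_succ]
  · rw [← permanent_permute_cols i.cycleRange, permanent, Finset.mul_sum]
    refine Finset.sum_congr rfl fun σ _ => ?_
    simp [Fin.prod_univ_succ, Fin.succAbove_cycleRange, Equiv.Perm.decomposeFin_symm_apply_zero,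
      Equiv.Perm.decomposeFin_symm_apply_succ]

end Matrix

def corrMatrix3 (y z w : ℂ) : Matrix (Fin 3) (Fin 3) ℂ :=
  !![1, y, z; conj y, 1, w; conj z, conj w, 1]

def corrMatrix4 (x y z t u w : ℂ) : Matrix (Fin 4) (Fin 4) ℂ :=
  !![1, x, y, z; conj x, 1, t, u; conj y, conj t, 1, w; conj z, conj u, conj w, 1]

def symmetricCoeffs (x t u : ℂ) : Matrix (Fin 3) (Fin 3) ℂ :=
  !![0, u, t; u, 0, conj x; t, conj x, 0]

section

variable (x y z t u w : ℂ)

lemma corrMatrix4_submatrix :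
    (corrMatrix4 x y z t u w).submatrix ![0, 2, 3] ![0, 2, 3] = corrMatrix3 y z w := by
  ext i j
  fin_cases i <;> fin_cases j <;> rfl

lemma permanent_corrMatrix3_expand :
    (corrMatrix3 y z w).permanent =
      1 + conj w * w + (conj y * (y + conj w * z) + conj z * (y * w + z)) := by
  simp +decide [corrMatrix3, permanent_succ_column_zero, Fin.sum_univ_succ,
    Fin.succAbove_of_le_castSucc, Fin.succAbove_of_castSucc_lt]

lemma permanent_corrMatrix4_expand :
    (corrMatrix4 x y z t u w).permanent =
      1 + conj w * w + (conj t * (t + conj w * u) + conj u * (t * w + u)) +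
        (conj x * (x * (1 + conj w * w) + (conj t * (y + conj w * z) + conj u * (y * w + z))) +
          (conj y * (x * (t + conj w * u) + (y + conj w * z + conj u * (y * u + t * z))) +
            conj z * (x * (t * w + u) + (y * w + z + conj t * (y * u + t * z))))) := by
  simp +decide [corrMatrix4, permanent_succ_column_zero, Fin.sum_univ_succ,
    Fin.succAbove_of_le_castSucc, Fin.succAbove_of_castSucc_lt]

lemma permanent_corrMatrix3 :
    (corrMatrix3 y z w).permanent =
      ((1 + 2 * (y * w * conj z).re + ‖y‖ ^ 2 + ‖z‖ ^ 2 + ‖w‖ ^ 2 : ℝ) : ℂ) := by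
  have hre := Complex.add_conj (y * w * conj z)
  simp only [map_mul, conj_conj] at hre
  rw [permanent_corrMatrix3_expand]
  push_cast at hre ⊢
  simp only [← Complex.conj_mul']
  linear_combination hre

lemma permanent_corrMatrix3_eq_det_add :
    (corrMatrix3 y z w).permanent =
      (corrMatrix3 y z w).det + ((2 * (‖y‖ ^ 2 + ‖z‖ ^ 2 + ‖w‖ ^ 2) : ℝ) : ℂ) := by
  rw [permanent_corrMatrix3_expand, det_fin_three]
  push_cast
  simp only [corrMatrix3, of_apply, cons_val', cons_val_zero, cons_val_fin_one, cons_val_one,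
    cons_val, mul_one, one_mul, ← conj_mul']
  ring

lemma two_mul_permanent_corrMatrix4_sub :
    2 * ((corrMatrix4 x y z t u w).permanent - (corrMatrix3 y z w).permanent) =
      star (vec (symmetricCoeffs x t u)) ⬝ᵥ
        (corrMatrix3 y z w ⊗ₖ corrMatrix3 y z w) *ᵥ vec (symmetricCoeffs x t u) := by
  rw [permanent_corrMatrix4_expand, permanent_corrMatrix3_expand]
  simp [corrMatrix3, symmetricCoeffs, dotProduct, mulVec, vec, flip, Fintype.sum_prod_type,
    Fin.sum_univ_succ]
  ring

variable {y z w}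

lemma permanent_corrMatrix3_nonneg (h : (corrMatrix3 y z w).PosSemidef) :
    0 ≤ (corrMatrix3 y z w).permanent := by
  rw [permanent_corrMatrix3_eq_det_add]
  exact add_nonneg h.det_nonneg (Complex.zero_le_real.mpr (by positivity))

lemma permanent_corrMatrix3_le_permanent_corrMatrix4 (h : (corrMatrix3 y z w).PosSemidef) :
    (corrMatrix3 y z w).permanent ≤ (corrMatrix4 x y z t u w).permanent := by
  have hform := (h.kronecker h).dotProduct_mulVec_nonneg (vec (symmetricCoeffs x t u))
  rw [← two_mul_permanent_corrMatrix4_sub] at hform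
  rw [← sub_nonneg]
  simpa using mul_nonneg (by positivity : (0 : ℂ) ≤ 1 / 2) hform

end

theorem lemma2_y3 (x y z t u w : ℂ)
    (A : Matrix (Fin 4) (Fin 4) ℂ)
    (hAdef : A = !![1, x, y, z;
                    (starRingEnd ℂ) x, 1, t, u;
                    (starRingEnd ℂ) y, (starRingEnd ℂ) t, 1, w;
                    (starRingEnd ℂ) z, (starRingEnd ℂ) u, (starRingEnd ℂ) w, 1])
    (hA : A.PosSemidef) :
    ((1 + 2 * (y * w * (starRingEnd ℂ) z).re + ‖y‖ ^ 2 + ‖z‖ ^ 2 + ‖w‖ ^ 2 : ℝ) : ℂ) ≤ A.permanent ∧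
      (0 : ℝ) ≤ 1 + 2 * (y * w * (starRingEnd ℂ) z).re + ‖y‖ ^ 2 + ‖z‖ ^ 2 + ‖w‖ ^ 2 := by
  subst hAdef
  have hB : (corrMatrix3 y z w).PosSemidef := by
    rw [← corrMatrix4_submatrix x y z t u w]
    exact hA.submatrix _
  rw [← Complex.zero_le_real, ← permanent_corrMatrix3]
  exact ⟨permanent_corrMatrix3_le_permanent_corrMatrix4 x t u hB, permanent_corrMatrix3_nonneg hB⟩
end

section
/- If the 4×4 matrix A (as defined) is positive semidefinite, then per(A) ≥ 1 + 2Re(t·w·ū) + |t|² + |u|² + |w|², and moreover 1 + 2Re(t·w·ū) + |t|² + |u|² + |w|² ≥ 0. -/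
/-!
Write `A = Bᴴ B` as the Gram matrix of the columns `b_k` of `B`. Expanding `per A` along the first
row and column gives `per A = per C + Q(x, y, z)`, where `per C = 1 + 2 Re(t w ū) + |t|² + |u|² + |w|²`
for the lower right `3 × 3` block `C`, and `Q` is the Hermitian form of the matrix of `2 × 2`
permanents of `C` on the index pairs `{2,3}, {1,3}, {1,2}`. That matrix is, up to a factor `2`, the
Gram matrix of the symmetric tensors `b_i ⊗ b_j + b_j ⊗ b_i`, so `Q ≥ 0`.

For the second claim, the principal minor on `{1,2}` gives `|t| ≤ 1`, and then
`1 + |t|² + |u|² + |w|² - 2|t||u||w| = (|u| - |t||w|)² + 1 + |t|² + |w|²(1 - |t|²) ≥ 0`.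
-/

open Matrix Complex ComplexOrder

theorem Matrix.permanent_fin_four {R : Type*} [CommSemiring R] (M : Matrix (Fin 4) (Fin 4) R) :
    M.permanent =
    M 0 0 * M 1 1 * M 2 2 * M 3 3 + M 0 0 * M 1 1 * M 3 2 * M 2 3 +
    M 0 0 * M 2 1 * M 1 2 * M 3 3 + M 0 0 * M 2 1 * M 3 2 * M 1 3 +
    M 0 0 * M 3 1 * M 2 2 * M 1 3 + M 0 0 * M 3 1 * M 1 2 * M 2 3 +
    M 1 0 * M 0 1 * M 2 2 * M 3 3 + M 1 0 * M 0 1 * M 3 2 * M 2 3 +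
    M 1 0 * M 2 1 * M 0 2 * M 3 3 + M 1 0 * M 2 1 * M 3 2 * M 0 3 +
    M 1 0 * M 3 1 * M 2 2 * M 0 3 + M 1 0 * M 3 1 * M 0 2 * M 2 3 +
    M 2 0 * M 1 1 * M 0 2 * M 3 3 + M 2 0 * M 1 1 * M 3 2 * M 0 3 +
    M 2 0 * M 0 1 * M 1 2 * M 3 3 + M 2 0 * M 0 1 * M 3 2 * M 1 3 +
    M 2 0 * M 3 1 * M 0 2 * M 1 3 + M 2 0 * M 3 1 * M 1 2 * M 0 3 +
    M 3 0 * M 1 1 * M 2 2 * M 0 3 + M 3 0 * M 1 1 * M 0 2 * M 2 3 +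
    M 3 0 * M 2 1 * M 1 2 * M 0 3 + M 3 0 * M 2 1 * M 0 2 * M 1 3 +
    M 3 0 * M 0 1 * M 2 2 * M 1 3 + M 3 0 * M 0 1 * M 1 2 * M 2 3 := by
  simp only [permanent, ← (Equiv.Perm.decomposeFin (n := 3)).symm.sum_comp,
    ← (Equiv.Perm.decomposeFin (n := 2)).symm.sum_comp,
    ← (Equiv.Perm.decomposeFin (n := 1)).symm.sum_comp, Fintype.sum_prod_type,
    Fin.prod_univ_succ, Equiv.Perm.decomposeFin_symm_apply_zero,
    Equiv.Perm.decomposeFin_symm_apply_succ, Fin.sum_univ_succ, Finset.univ_unique,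
    Finset.sum_singleton]
  norm_num [Fin.ext_iff, Equiv.swap_apply_def]
  norm_num [show (Fin.succ 2 : Fin 4) = 3 from rfl]
  ring

namespace Matrix

variable {m n ι : Type*}

/-- Entry `(p, q)` is the permanent of the `2 × 2` submatrix of `A` on rows `{i p, j p}` and
columns `{i q, j q}`. -/
def pairPermanents {R : Type*} [CommSemiring R] (A : Matrix n n R) (i j : ι → n) :
    Matrix ι ι R :=
  of fun p q => A (i p) (i q) * A (j p) (j q) + A (i p) (j q) * A (j p) (i q)

-- The inner product of the symmetric tensors `b_a ⊗ b_b + b_b ⊗ b_a` and `b_a' ⊗ b_b' + b_b' ⊗ b_a'`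
-- built from the columns `b_k` of `B`.
theorem sum_star_symmProd_mul_symmProd [Fintype m] (B : Matrix m n ℂ) (a b a' b' : n) :
    ∑ r, ∑ s, star (B r a * B s b + B r b * B s a) * (B r a' * B s b' + B r b' * B s a') =
      2 * ((Bᴴ * B) a a' * (Bᴴ * B) b b' + (Bᴴ * B) a b' * (Bᴴ * B) b a') := by
  set X : m → m → ℂ := fun r s => star (B r a) * B r a' * (star (B s b) * B s b') +
    star (B r a) * B r b' * (star (B s b) * B s a')
  calc _ = ∑ r, ∑ s, (X r s + X s r) := by
        refine Fintype.sum_congr _ _ fun r => Fintype.sum_congr _ _ fun s => ?_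
        simp only [X, star_add, star_mul']
        ring
    _ = 2 * ∑ r, ∑ s, X r s := by
        simp only [Finset.sum_add_distrib, two_mul]
        rw [Finset.sum_comm (f := fun r s => X s r)]
    _ = _ := by
        simp only [X, mul_apply, conjTranspose_apply, Finset.sum_mul_sum, Finset.sum_add_distrib]

open scoped MatrixOrder in
theorem PosSemidef.pairPermanents [Fintype n] [Fintype ι] {A : Matrix n n ℂ}
    (hA : A.PosSemidef) (i j : ι → n) : (A.pairPermanents i j).PosSemidef := by
  refine .of_dotProduct_mulVec_nonneg ?_ fun c => ?_
  · ext p q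
    simp only [Matrix.pairPermanents, conjTranspose_apply, of_apply, star_add, star_mul',
      hA.1.apply]
    ring
  classical
  obtain ⟨B, rfl⟩ := CStarAlgebra.nonneg_iff_eq_star_mul_self.mp hA.nonneg
  rw [star_eq_conjTranspose]
  set v : ι → n → n → ℂ := fun p r s => B r (i p) * B s (j p) + B r (j p) * B s (i p)
  have hgram : ∑ r, ∑ s, star (∑ p, c p * v p r s) * ∑ q, c q * v q r s =
      2 * (star c ⬝ᵥ (Bᴴ * B).pairPermanents i j *ᵥ c) := by
    calc _ = ∑ r, ∑ s, ∑ p, ∑ q, star (c p) * c q * (star (v p r s) * v q r s) := by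
          simp only [star_sum, Finset.sum_mul_sum, star_mul']
          refine Fintype.sum_congr _ _ fun r => Fintype.sum_congr _ _ fun s =>
            Fintype.sum_congr _ _ fun p => Fintype.sum_congr _ _ fun q => ?_
          ring
      _ = ∑ p, ∑ q, star (c p) * c q * ∑ r, ∑ s, star (v p r s) * v q r s := by
          simp only [Finset.mul_sum]
          simp_rw [Finset.sum_comm (γ := n) (α := ι)]
      _ = _ := by
          simp only [v, sum_star_symmProd_mul_symmProd, Matrix.pairPermanents, dotProduct,
            mulVec, Pi.star_apply, Finset.mul_sum, of_apply]
          refine Fintype.sum_congr _ _ fun p => Fintype.sum_congr _ _ fun q => ?_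
          ring
  have hsum : 0 ≤ ∑ r, ∑ s, star (∑ p, c p * v p r s) * ∑ q, c q * v q r s :=
    Finset.sum_nonneg fun r _ => Finset.sum_nonneg fun s _ => star_mul_self_nonneg _
  rw [hgram] at hsum
  simpa using mul_nonneg (inv_nonneg.mpr zero_le_two) hsum

theorem PosSemidef.normSq_apply_le [Fintype n] {A : Matrix n n ℂ} (hA : A.PosSemidef)
    (i j : n) : normSq (A i j) ≤ (A i i).re * (A j j).re := by
  have hdet := (hA.submatrix ![i, j]).det_nonneg
  simp only [det_fin_two, submatrix_apply, cons_val_zero, cons_val_one] at hdet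
  rw [← hA.1.apply j i, Complex.star_def, Complex.mul_conj] at hdet
  have him (k : n) : (A k k).im = 0 := by rw [← hA.1.coe_re_apply_self k]; simp
  have := (Complex.le_def.mp hdet).1
  simp only [zero_re, sub_re, mul_re, him, mul_zero, sub_zero, ofReal_re] at this
  linarith

end Matrix

theorem one_add_two_mul_re_add_sq_norm_nonneg {t u w : ℂ} (ht : ‖t‖ ≤ 1) :
    0 ≤ 1 + 2 * (t * w * (starRingEnd ℂ) u).re + ‖t‖ ^ 2 + ‖u‖ ^ 2 + ‖w‖ ^ 2 := by
  have hre : -(‖t‖ * ‖w‖ * ‖u‖) ≤ (t * w * (starRingEnd ℂ) u).re := by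
    have := abs_re_le_norm (t * w * (starRingEnd ℂ) u)
    rw [norm_mul, norm_mul, Complex.norm_conj] at this
    exact neg_le_of_abs_le this
  nlinarith [sq_nonneg (‖u‖ - ‖t‖ * ‖w‖), norm_nonneg t, norm_nonneg u, norm_nonneg w,
    mul_nonneg (sq_nonneg ‖w‖) (sub_nonneg.mpr ht)]

theorem lemma2_y4 (x y z t u w : ℂ)
    (A : Matrix (Fin 4) (Fin 4) ℂ)
    (hAdef : A = !![1, x, y, z;
                    (starRingEnd ℂ) x, 1, t, u;
                    (starRingEnd ℂ) y, (starRingEnd ℂ) t, 1, w;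
                    (starRingEnd ℂ) z, (starRingEnd ℂ) u, (starRingEnd ℂ) w, 1])
    (hA : A.PosSemidef) :
    ((1 + 2 * (t * w * (starRingEnd ℂ) u).re + ‖t‖ ^ 2 + ‖u‖ ^ 2 + ‖w‖ ^ 2 : ℝ) : ℂ) ≤ A.permanent ∧
      (0 : ℝ) ≤ 1 + 2 * (t * w * (starRingEnd ℂ) u).re + ‖t‖ ^ 2 + ‖u‖ ^ 2 + ‖w‖ ^ 2 := by
  have ht : ‖t‖ ≤ 1 := by
    simpa [hAdef, ← Complex.sq_norm, sq_le_one_iff₀] using hA.normSq_apply_le 1 2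
  refine ⟨?_, one_add_two_mul_re_add_sq_norm_nonneg ht⟩
  have hQ := (hA.pairPermanents ![2, 1, 1] ![3, 3, 2]).dotProduct_mulVec_nonneg ![x, y, z]
  have hper : A.permanent =
      ((1 + 2 * (t * w * (starRingEnd ℂ) u).re + ‖t‖ ^ 2 + ‖u‖ ^ 2 + ‖w‖ ^ 2 : ℝ) : ℂ) +
      star ![x, y, z] ⬝ᵥ A.pairPermanents ![2, 1, 1] ![3, 3, 2] *ᵥ ![x, y, z] := by
    subst hAdef
    rw [permanent_fin_four]
    simp only [ofReal_add, ofReal_mul, ofReal_pow, ofReal_one, ofReal_ofNat, re_eq_add_conj,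
      ← mul_conj']
    simp only [pairPermanents, dotProduct, mulVec, Fin.sum_univ_three, of_apply, cons_val',
      cons_val_zero, cons_val_one, cons_val, cons_val_fin_one, Pi.star_apply, RCLike.star_def,
      map_mul, RingHomCompTriple.comp_apply, RingHom.id_apply, mul_one, one_mul]
    ring
  rw [hper]
  exact le_add_of_nonneg_right hQ
end
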